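/- For the three-web on the domain {(x¹,x²,y¹,y²) ∈ ℝ⁴ : x² ≠ 0, y² ≠ 0} given by f¹ = x¹ + y¹, f² = −x¹y¹ + x²y², the isoclinicity invariants satisfy p = q = (y¹ − x¹)/(2(x²y²)²); hence the web is nonisoclinic exactly where x¹ ≠ y¹, and since p = q it cannot be extended to a nonisoclinic web W(4,2,2) (class G₃). -/

import Mathlib

noncomputable section

open Matrix

/-- Partial derivative of `g` with respect to the `j`-th coordinate at the point `x`. -/
def pd (j : Fin 2) (g : (Fin 2 → ℝ) → ℝ) (x : Fin 2 → ℝ) : ℝ :=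
  deriv (fun t => g (Function.update x j t)) (x j)

variable (f : Fin 2 → (Fin 2 → ℝ) → (Fin 2 → ℝ) → ℝ)

/-- Jacobian matrix `f̄ = (∂fⁱ/∂xʲ)` with respect to the first group of variables. -/
def fbar (x y : Fin 2 → ℝ) : Matrix (Fin 2) (Fin 2) ℝ :=
  Matrix.of fun i j => pd j (fun x' => f i x' y) x

/-- Jacobian matrix `f̃ = (∂fⁱ/∂yʲ)` with respect to the second group of variables. -/
def ftil (x y : Fin 2 → ℝ) : Matrix (Fin 2) (Fin 2) ℝ :=
  Matrix.of fun i j => pd j (fun y' => f i x y') y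

/-- Mixed second partial derivative `∂²fⁱ/∂xˡ∂yᵐ`. -/
def d2 (i l m : Fin 2) (x y : Fin 2 → ℝ) : ℝ :=
  pd m (fun y' => pd l (fun x' => f i x' y') x) y

/-- Connection coefficients
`Γⁱⱼₖ = −∑_{l,m} (∂²fⁱ/∂xˡ∂yᵐ) ḡˡⱼ g̃ᵐₖ`, where `ḡ = f̄⁻¹`, `g̃ = f̃⁻¹`. -/
def Gam (i j k : Fin 2) (x y : Fin 2 → ℝ) : ℝ :=
  - ∑ l : Fin 2, ∑ m : Fin 2,
      d2 f i l m x y * (fbar f x y)⁻¹ l j * (ftil f x y)⁻¹ m k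

/-- Torsion covector `aⱼ = ∑ₖ (Γᵏⱼₖ − Γᵏₖⱼ)`. -/
def aCov (j : Fin 2) (x y : Fin 2 → ℝ) : ℝ :=
  ∑ k : Fin 2, (Gam f k j k x y - Gam f k k j x y)

/-- Covariant derivative `p_{ik} = ∑ₘ (∂aᵢ/∂xᵐ) ḡᵐₖ − ∑ⱼ aⱼ Γʲₖᵢ`. -/
def pCov (i k : Fin 2) (x y : Fin 2 → ℝ) : ℝ :=
  (∑ m : Fin 2, pd m (fun x' => aCov f i x' y) x * (fbar f x y)⁻¹ m k)
    - ∑ j : Fin 2, aCov f j x y * Gam f j k i x y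

/-- Covariant derivative `q_{ik} = ∑ₘ (∂aᵢ/∂yᵐ) g̃ᵐₖ − ∑ⱼ aⱼ Γʲᵢₖ`. -/
def qCov (i k : Fin 2) (x y : Fin 2 → ℝ) : ℝ :=
  (∑ m : Fin 2, pd m (fun y' => aCov f i x y') y * (ftil f x y)⁻¹ m k)
    - ∑ j : Fin 2, aCov f j x y * Gam f j i k x y

/-- Isoclinicity invariant `p = (p₁₂ − p₂₁)/2`. -/
def pIso (x y : Fin 2 → ℝ) : ℝ := (pCov f 0 1 x y - pCov f 1 0 x y) / 2

/-- Isoclinicity invariant `q = (q₁₂ − q₂₁)/2`. -/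
def qIso (x y : Fin 2 → ℝ) : ℝ := (qCov f 0 1 x y - qCov f 1 0 x y) / 2


/-- The web `f¹ = x¹ + y¹`, `f² = −x¹y¹ + x²y²`.
(Indices: `x 0 ↦ x¹`, `x 1 ↦ x²`, `y 0 ↦ y¹`, `y 1 ↦ y²`.) -/
noncomputable def webC : Fin 2 → (Fin 2 → ℝ) → (Fin 2 → ℝ) → ℝ :=
  ![fun x y => x 0 + y 0,
    fun x y => -(x 0 * y 0) + x 1 * y 1]

/-
The first component f¹ = x¹ + y¹ has vanishing mixed second derivatives, so Γ¹ⱼₖ ≡ 0; since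
the diagonal terms of aⱼ = ∑ₖ (Γᵏⱼₖ − Γᵏₖⱼ) cancel, also a₂ = Γ¹₂₁ − Γ¹₁₂ ≡ 0. Hence the
algebraic terms aⱼΓʲ of p_{ik} and q_{ik} drop out, and p, q are derivatives of the single
torsion component a₁ = (x¹ − y¹)/(x²y²) (computed from ḡ, g̃ and ∂²f²/∂x¹∂y¹ = −1,
∂²f²/∂x²∂y² = 1): p = ½ (∂a₁/∂x²) ḡ²₂ and q = ½ (∂a₁/∂y²) g̃²₂.
-/

open Filter Topology

theorem pd_zero_eq (g : (Fin 2 → ℝ) → ℝ) (x : Fin 2 → ℝ) :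
    pd 0 g x = deriv (fun t => g ![t, x 1]) (x 0) := by
  have (t : ℝ) : Function.update x 0 t = ![t, x 1] := by
    ext i; fin_cases i <;> simp
  simp only [pd, this]

theorem pd_one_eq (g : (Fin 2 → ℝ) → ℝ) (x : Fin 2 → ℝ) :
    pd 1 g x = deriv (fun t => g ![x 0, t]) (x 1) := by
  have (t : ℝ) : Function.update x 1 t = ![x 0, t] := by
    ext i; fin_cases i <;> simp
  simp only [pd, this]

@[simp]
theorem pd_const (j : Fin 2) (c : ℝ) (x : Fin 2 → ℝ) : pd j (fun _ => c) x = 0 :=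
  deriv_const _ c

theorem d2_eq_pd_fbar (i l m : Fin 2) (x y : Fin 2 → ℝ) :
    d2 f i l m x y = pd m (fun y' => fbar f x y' i l) y :=
  rfl

theorem aCov_zero_eq (x y : Fin 2 → ℝ) :
    aCov f 0 x y = Gam f 1 0 1 x y - Gam f 1 1 0 x y := by
  simp [aCov, Fin.sum_univ_two]

theorem aCov_one_eq (x y : Fin 2 → ℝ) :
    aCov f 1 x y = Gam f 0 1 0 x y - Gam f 0 0 1 x y := by
  simp [aCov, Fin.sum_univ_two]

theorem Matrix.inv_fin_two_lowerTriangular {K : Type*} [Field K] (c d : K) (hd : d ≠ 0) :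
    !![1, 0; c, d]⁻¹ = !![1, 0; -c / d, 1 / d] := by
  refine Matrix.inv_eq_right_inv ?_
  rw [Matrix.mul_fin_two, Matrix.one_fin_two]
  simp [hd, mul_div_cancel₀]

theorem fbar_webC (x y : Fin 2 → ℝ) : fbar webC x y = !![1, 0; -y 0, y 1] := by
  ext i j
  fin_cases i <;> fin_cases j <;> simp [fbar, webC, pd_zero_eq, pd_one_eq]

theorem ftil_webC (x y : Fin 2 → ℝ) : ftil webC x y = !![1, 0; -x 0, x 1] := by
  ext i j
  fin_cases i <;> fin_cases j <;> simp [ftil, webC, pd_zero_eq, pd_one_eq]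

theorem d2_webC_zero (l m : Fin 2) (x y : Fin 2 → ℝ) : d2 webC 0 l m x y = 0 := by
  simp [d2_eq_pd_fbar, fbar_webC]

theorem d2_webC_one (l m : Fin 2) (x y : Fin 2 → ℝ) :
    d2 webC 1 l m x y = !![-1, 0; 0, 1] l m := by
  fin_cases l <;> fin_cases m <;> simp [d2_eq_pd_fbar, fbar_webC, pd_zero_eq, pd_one_eq]

theorem inv_fbar_webC (x y : Fin 2 → ℝ) (hy : y 1 ≠ 0) :
    (fbar webC x y)⁻¹ = !![1, 0; y 0 / y 1, 1 / y 1] := by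
  rw [fbar_webC, Matrix.inv_fin_two_lowerTriangular _ _ hy, neg_neg]

theorem inv_ftil_webC (x y : Fin 2 → ℝ) (hx : x 1 ≠ 0) :
    (ftil webC x y)⁻¹ = !![1, 0; x 0 / x 1, 1 / x 1] := by
  rw [ftil_webC, Matrix.inv_fin_two_lowerTriangular _ _ hx, neg_neg]

theorem Gam_webC_zero (j k : Fin 2) (x y : Fin 2 → ℝ) : Gam webC 0 j k x y = 0 := by
  simp [Gam, d2_webC_zero]

theorem aCov_webC_zero {x y : Fin 2 → ℝ} (hx : x 1 ≠ 0) (hy : y 1 ≠ 0) :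
    aCov webC 0 x y = (x 0 - y 0) / (x 1 * y 1) := by
  simp [aCov_zero_eq, Gam, Fin.sum_univ_two, d2_webC_one, inv_fbar_webC x y hy,
    inv_ftil_webC x y hx]
  field_simp
  ring

theorem aCov_webC_one (x y : Fin 2 → ℝ) : aCov webC 1 x y = 0 := by
  rw [aCov_one_eq, Gam_webC_zero, Gam_webC_zero, sub_self]

theorem sum_aCov_mul_Gam_webC (i k : Fin 2) (x y : Fin 2 → ℝ) :
    ∑ j, aCov webC j x y * Gam webC j i k x y = 0 := by
  simp [Fin.sum_univ_two, Gam_webC_zero, aCov_webC_one]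

theorem pd_one_aCov_webC_zero_left {x y : Fin 2 → ℝ} (hx : x 1 ≠ 0) (hy : y 1 ≠ 0) :
    pd 1 (fun x' => aCov webC 0 x' y) x = -((x 0 - y 0) / (x 1 ^ 2 * y 1)) := by
  have hloc : (fun t => aCov webC 0 ![x 0, t] y) =ᶠ[𝓝 (x 1)] fun t => (x 0 - y 0) / y 1 * t⁻¹ := by
    filter_upwards [eventually_ne_nhds hx] with t ht
    rw [aCov_webC_zero (by simpa using ht) hy]
    simp only [Matrix.cons_val_zero, Matrix.cons_val_one]
    field_simp
  rw [pd_one_eq, hloc.deriv_eq, ((hasDerivAt_inv hx).const_mul _).deriv]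
  field_simp

theorem pd_one_aCov_webC_zero_right {x y : Fin 2 → ℝ} (hx : x 1 ≠ 0) (hy : y 1 ≠ 0) :
    pd 1 (fun y' => aCov webC 0 x y') y = -((x 0 - y 0) / (x 1 * y 1 ^ 2)) := by
  have hloc : (fun t => aCov webC 0 x ![y 0, t]) =ᶠ[𝓝 (y 1)] fun t => (x 0 - y 0) / x 1 * t⁻¹ := by
    filter_upwards [eventually_ne_nhds hy] with t ht
    rw [aCov_webC_zero hx (by simpa using ht)]
    simp only [Matrix.cons_val_zero, Matrix.cons_val_one]
    field_simp
  rw [pd_one_eq, hloc.deriv_eq, ((hasDerivAt_inv hy).const_mul _).deriv]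
  field_simp

theorem pCov_webC (i k : Fin 2) (x y : Fin 2 → ℝ) :
    pCov webC i k x y = ∑ m, pd m (fun x' => aCov webC i x' y) x * (fbar webC x y)⁻¹ m k := by
  rw [pCov, sum_aCov_mul_Gam_webC, sub_zero]

theorem qCov_webC (i k : Fin 2) (x y : Fin 2 → ℝ) :
    qCov webC i k x y = ∑ m, pd m (fun y' => aCov webC i x y') y * (ftil webC x y)⁻¹ m k := by
  rw [qCov, sum_aCov_mul_Gam_webC, sub_zero]

theorem pIso_webC {x y : Fin 2 → ℝ} (hx : x 1 ≠ 0) (hy : y 1 ≠ 0) :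
    pIso webC x y = (y 0 - x 0) / (2 * (x 1 * y 1) ^ 2) := by
  simp [pIso, pCov_webC, aCov_webC_one, Fin.sum_univ_two, inv_fbar_webC x y hy,
    pd_one_aCov_webC_zero_left hx hy]
  field_simp
  ring

theorem qIso_webC {x y : Fin 2 → ℝ} (hx : x 1 ≠ 0) (hy : y 1 ≠ 0) :
    qIso webC x y = (y 0 - x 0) / (2 * (x 1 * y 1) ^ 2) := by
  simp [qIso, qCov_webC, aCov_webC_one, Fin.sum_univ_two, inv_ftil_webC x y hx,
    pd_one_aCov_webC_zero_right hx hy]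
  field_simp
  ring

/-- For the web `webC` on the domain `x² ≠ 0, y² ≠ 0`, the isoclinicity
invariants satisfy `p = q = (y¹ − x¹)/(2(x²y²)²)`; hence the web is
nonisoclinic exactly where `x¹ ≠ y¹`, and since `p = q` it cannot be extended
to a nonisoclinic web `W(4,2,2)` (class G₃). -/
theorem webC_isoclinicity_invariants (x y : Fin 2 → ℝ)
    (h1 : x 1 ≠ 0) (h2 : y 1 ≠ 0) :
    pIso webC x y = (y 0 - x 0) / (2 * (x 1 * y 1)^2) ∧
    qIso webC x y = (y 0 - x 0) / (2 * (x 1 * y 1)^2) ∧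
    ((pIso webC x y)^2 + (qIso webC x y)^2 > 0 ↔ x 0 ≠ y 0) := by
  refine ⟨pIso_webC h1 h2, qIso_webC h1 h2, ?_⟩
  have hden : 2 * (x 1 * y 1) ^ 2 ≠ 0 := by positivity
  rw [pIso_webC h1 h2, qIso_webC h1 h2, ← two_mul, gt_iff_lt, mul_pos_iff_of_pos_left two_pos,
    sq_pos_iff, div_ne_zero_iff, and_iff_left hden, sub_ne_zero, ne_comm]

end
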